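/- Let X be a homogeneous space with a regular G_δ-diagonal. Then |X| ≤ wL(X)^{πχ(X)}. -/

import Mathlib

open Set Topology

universe u

namespace DiagonalPaper

/-- The star of a set `A` with respect to a family `𝒰`:
the union of all members of `𝒰` meeting `A`. -/
def st {X : Type u} (A : Set X) (𝒰 : Set (Set X)) : Set X :=
  ⋃₀ {U | U ∈ 𝒰 ∧ (U ∩ A).Nonempty}

/-- Iterated star `Stⁿ(A, 𝒰)`. -/
def stn {X : Type u} (n : ℕ) (A : Set X) (𝒰 : Set (Set X)) : Set X :=
  (fun B => st B 𝒰)^[n] A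

/-- `𝒰` is an open cover of the space `X`. -/
def IsOpenCover {X : Type u} [TopologicalSpace X] (𝒰 : Set (Set X)) : Prop :=
  (∀ U ∈ 𝒰, IsOpen U) ∧ ⋃₀ 𝒰 = Set.univ

/-- The weak Lindelöf number of `X` (by convention at least `ℵ₀`): the least `κ` such that
every open cover has a subfamily of size at most `κ` with dense union. -/
noncomputable def weakLindelof (X : Type u) [TopologicalSpace X] : Cardinal.{u} :=
  Cardinal.aleph0 ⊔ sInf {κ | ∀ 𝒰 : Set (Set X), IsOpenCover 𝒰 →
    ∃ 𝒱 ⊆ 𝒰, Cardinal.mk ↥𝒱 ≤ κ ∧ Dense (⋃₀ 𝒱)}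

/-- `B` is a local π-base at `x`: a family of nonempty open sets such that
every open neighbourhood of `x` contains a member of `B`. -/
def IsPiBaseAt {X : Type u} [TopologicalSpace X] (x : X) (B : Set (Set X)) : Prop :=
  (∀ V ∈ B, IsOpen V ∧ V.Nonempty) ∧
    ∀ U : Set X, IsOpen U → x ∈ U → ∃ V ∈ B, V ⊆ U

/-- The π-character of `X` (by convention at least `ℵ₀`): the supremum over `x ∈ X` of the
least cardinality of a local π-base at `x`. -/
noncomputable def piCharacter (X : Type u) [TopologicalSpace X] : Cardinal.{u} :=
  Cardinal.aleph0 ⊔ ⨆ x : X, sInf {κ | ∃ B : Set (Set X), IsPiBaseAt x B ∧ Cardinal.mk ↥B ≤ κ}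

/-- `X` has a regular `G_δ`-diagonal: the diagonal is the intersection of countably many
open sets `U_n` of `X²` as well as of their closures. -/
def HasRegularGDeltaDiagonal (X : Type u) [TopologicalSpace X] : Prop :=
  ∃ U : ℕ → Set (X × X), (∀ n, IsOpen (U n)) ∧
    Set.diagonal X = ⋂ n, U n ∧ Set.diagonal X = ⋂ n, closure (U n)

/-! Fix `p : X`, a π-base `𝔅` at `p` with `|𝔅| ≤ πχ(X)`, and homeomorphisms `h_x` with
`h_x p = x`. Each of Zenor's covers `𝒞 n` has a subfamily `𝒱 n` of size `≤ wL(X)` with dense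
union, so every `h_x(β)`, `β ∈ 𝔅`, meets a member of `𝒱 n`; choosing one for each `(n, β)`
codes `x` by an element of `∏_{(n, β)} 𝒱 n`, a set of size `≤ wL(X)^{πχ(X)}`. For `x ≠ y`,
pulling Zenor's separation of `x` and `y` back along `h_x` and `h_y` to `p` yields `n` and
`β` such that no member of `𝒞 n` meets both `h_x(β)` and `h_y(β)`, so the codes differ. -/

open Cardinal Filter Function

theorem mk_prod_nat_le {α : Type u} {κ : Cardinal.{u}} (hα : #α ≤ κ) (hκ : ℵ₀ ≤ κ) :
    #(ℕ × α) ≤ κ := by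
  simpa using (mul_le_max_of_aleph0_le_left le_rfl).trans (max_le hκ hα)

theorem mk_pi_le_pow {ι : Type u} {β : ι → Type u} {κ μ : Cardinal.{u}} (hβ : ∀ i, #(β i) ≤ κ)
    (hι : #ι ≤ μ) (hκ : κ ≠ 0) : #(Π i, β i) ≤ κ ^ μ :=
  calc #(Π i, β i) = prod fun i => #(β i) := mk_pi β
    _ ≤ prod fun _ : ι => κ := prod_le_prod _ _ hβ
    _ = κ ^ #ι := prod_const' ι κ
    _ ≤ κ ^ μ := power_le_power_left hκ hι

theorem subset_st {X : Type u} {𝒰 : Set (Set X)} {A V : Set X} (hV : V ∈ 𝒰)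
    (hVA : (V ∩ A).Nonempty) : V ⊆ st A 𝒰 :=
  subset_sUnion_of_mem ⟨hV, hVA⟩

theorem st_mono {X : Type u} {A B : Set X} (h : A ⊆ B) (𝒰 : Set (Set X)) : st A 𝒰 ⊆ st B 𝒰 :=
  sUnion_mono fun _ ⟨hV, hVA⟩ => ⟨hV, hVA.mono (inter_subset_inter_right _ h)⟩

section Topology

variable {X : Type u} [TopologicalSpace X]

theorem aleph0_le_weakLindelof : ℵ₀ ≤ weakLindelof X := le_sup_left

theorem aleph0_le_piCharacter : ℵ₀ ≤ piCharacter X := le_sup_left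

theorem IsOpenCover.exists_dense_sUnion_card_le {𝒰 : Set (Set X)} (h𝒰 : IsOpenCover 𝒰) :
    ∃ 𝒱 ⊆ 𝒰, #𝒱 ≤ weakLindelof X ∧ Dense (⋃₀ 𝒱) := by
  have hne : Set.Nonempty {κ | ∀ 𝒰 : Set (Set X), IsOpenCover 𝒰 →
      ∃ 𝒱 ⊆ 𝒰, #𝒱 ≤ κ ∧ Dense (⋃₀ 𝒱)} :=
    ⟨#(Set X), fun 𝒰 h𝒰 => ⟨𝒰, subset_rfl, mk_set_le _, h𝒰.2 ▸ dense_univ⟩⟩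
  obtain ⟨𝒱, h𝒱𝒰, h𝒱card, h𝒱dense⟩ := csInf_mem hne 𝒰 h𝒰
  exact ⟨𝒱, h𝒱𝒰, h𝒱card.trans le_sup_right, h𝒱dense⟩

theorem exists_isPiBaseAt_card_le_piCharacter (x : X) :
    ∃ B : Set (Set X), IsPiBaseAt x B ∧ #B ≤ piCharacter X := by
  have hne : Set.Nonempty {κ | ∃ B : Set (Set X), IsPiBaseAt x B ∧ #B ≤ κ} :=
    ⟨#(Set X), {V | IsOpen V ∧ V.Nonempty},
      ⟨fun _ hV => hV, fun U hU hxU => ⟨U, ⟨hU, x, hxU⟩, subset_rfl⟩⟩, mk_set_le _⟩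
  obtain ⟨B, hB, hBcard⟩ := csInf_mem hne
  exact ⟨B, hB, hBcard.trans <| (le_ciSup bddAbove_of_small x).trans le_sup_right⟩

theorem IsPiBaseAt.exists_subset_of_mem_nhds {x : X} {B : Set (Set X)} (hB : IsPiBaseAt x B)
    {s : Set X} (hs : s ∈ 𝓝 x) : ∃ V ∈ B, V ⊆ s := by
  obtain ⟨U, hUs, hU, hxU⟩ := mem_nhds_iff.mp hs
  obtain ⟨V, hVB, hVU⟩ := hB.2 U hU hxU
  exact ⟨V, hVB, hVU.trans hUs⟩

theorem isOpenCover_setOf_prod_subset {W : Set (X × X)} (hW : IsOpen W)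
    (hdiag : diagonal X ⊆ W) : IsOpenCover {V : Set X | IsOpen V ∧ V ×ˢ V ⊆ W} := by
  refine ⟨fun V hV => hV.1, eq_univ_of_forall fun x => ?_⟩
  obtain ⟨A, B, hA, hB, hxA, hxB, hAB⟩ := isOpen_prod_iff.mp hW x x (hdiag rfl)
  exact ⟨A ∩ B, ⟨hA.inter hB, (prod_mono inter_subset_left inter_subset_right).trans hAB⟩,
    hxA, hxB⟩

theorem exists_mem_nhds_notMem_closure_st {W : Set (X × X)} {𝒰 : Set (Set X)}
    (h𝒰 : ∀ V ∈ 𝒰, V ×ˢ V ⊆ W) {x y : X} (hxy : (x, y) ∉ closure W) :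
    ∃ A ∈ 𝓝 x, y ∉ closure (st A 𝒰) := by
  obtain ⟨A, B, hA, hB, hxA, hyB, hAB⟩ :=
    isOpen_prod_iff.mp isClosed_closure.isOpen_compl x y hxy
  refine ⟨A, hA.mem_nhds hxA, fun hy => ?_⟩
  obtain ⟨z, hzB, V, ⟨hV𝒰, a, haV, haA⟩, hzV⟩ := mem_closure_iff.mp hy B hB hyB
  exact hAB (show (a, z) ∈ A ×ˢ B from ⟨haA, hzB⟩) (subset_closure (h𝒰 V hV𝒰 ⟨haV, hzV⟩))

/-- Zenor's characterization of a regular `G_δ`-diagonal (the easy direction). -/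
theorem HasRegularGDeltaDiagonal.exists_isOpenCover_seq (hd : HasRegularGDeltaDiagonal X) :
    ∃ 𝒞 : ℕ → Set (Set X), (∀ n, IsOpenCover (𝒞 n)) ∧
      ∀ x y, x ≠ y → ∃ A ∈ 𝓝 x, ∃ n, y ∉ closure (st A (𝒞 n)) := by
  obtain ⟨W, hWopen, hWdiag, hWcl⟩ := hd
  refine ⟨fun n => {V | IsOpen V ∧ V ×ˢ V ⊆ W n},
    fun n => isOpenCover_setOf_prod_subset (hWopen n) (hWdiag.trans_subset (iInter_subset _ n)),
    fun x y hxy => ?_⟩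
  have hxy' : (x, y) ∉ ⋂ n, closure (W n) := hWcl ▸ hxy
  obtain ⟨n, hn⟩ := by simpa only [mem_iInter, not_forall] using hxy'
  obtain ⟨A, hA, hy⟩ :=
    exists_mem_nhds_notMem_closure_st (𝒰 := {V | IsOpen V ∧ V ×ˢ V ⊆ W n}) (fun _ hV => hV.2) hn
  exact ⟨A, hA, n, hy⟩

theorem exists_mem_nhds_disjoint_st_image {Y : Type*} [TopologicalSpace Y]
    {𝒰 : Set (Set X)} {φ ψ : Y → X} {p : Y} {A : Set X} (hA : A ∈ 𝓝 (φ p))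
    (hφ : ContinuousAt φ p) (hψ : ContinuousAt ψ p) (hψp : ψ p ∉ closure (st A 𝒰)) :
    ∃ W ∈ 𝓝 p, ∀ O ⊆ W, Disjoint (st (φ '' O) 𝒰) (ψ '' O) := by
  refine ⟨φ ⁻¹' A ∩ ψ ⁻¹' (closure (st A 𝒰))ᶜ,
    inter_mem (hφ hA) (hψ (isClosed_closure.isOpen_compl.mem_nhds hψp)), fun O hO => ?_⟩
  have hφO : φ '' O ⊆ A := image_subset_iff.mpr fun _ hz => (hO hz).1
  have hψO : ψ '' O ⊆ (closure (st A 𝒰))ᶜ := image_subset_iff.mpr fun _ hz => (hO hz).2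
  exact Disjoint.mono ((st_mono hφO 𝒰).trans subset_closure) hψO disjoint_compl_right

theorem exists_injective_pi_of_isPiBaseAt {p : X} {𝔅 : Set (Set X)} (h𝔅 : IsPiBaseAt p 𝔅)
    (h : X → X ≃ₜ X) (hhp : ∀ x, h x p = x) {𝒞 𝒱 : ℕ → Set (Set X)} (h𝒱𝒞 : ∀ n, 𝒱 n ⊆ 𝒞 n)
    (h𝒱 : ∀ n, Dense (⋃₀ 𝒱 n))
    (hsep : ∀ x y, x ≠ y → ∃ A ∈ 𝓝 x, ∃ n, y ∉ closure (st A (𝒞 n))) :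
    ∃ f : X → Π q : ℕ × 𝔅, 𝒱 q.1, Injective f := by
  have hmeets : ∀ x (q : ℕ × 𝔅), ∃ V ∈ 𝒱 q.1, (V ∩ h x '' q.2).Nonempty := by
    rintro x ⟨n, β, hβ⟩
    obtain ⟨z, hzβ, V, hV, hzV⟩ := (h𝒱 n).inter_open_nonempty _
      ((h x).isOpen_image.mpr (h𝔅.1 β hβ).1) ((h𝔅.1 β hβ).2.image _)
    exact ⟨V, hV, z, hzV, hzβ⟩
  choose F hF𝒱 hFmeets using hmeets
  refine ⟨fun x q => ⟨F x q, hF𝒱 x q⟩, fun x y hFxy => by_contra fun hxy => ?_⟩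
  obtain ⟨A, hA, n, hy⟩ := hsep x y hxy
  obtain ⟨W, hW, hWdisj⟩ := exists_mem_nhds_disjoint_st_image (𝒰 := 𝒞 n) (φ := h x) (ψ := h y)
    (by rwa [hhp]) (h x).continuous.continuousAt (h y).continuous.continuousAt (by rwa [hhp])
  obtain ⟨β, hβ, hβW⟩ := h𝔅.exists_subset_of_mem_nhds hW
  set q : ℕ × 𝔅 := (n, ⟨β, hβ⟩)
  have hFyx : F y q = F x q := congrArg Subtype.val (congrFun hFxy q).symm
  obtain ⟨z, hzF, hzβ⟩ := hFmeets y q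
  exact disjoint_left.mp (hWdisj β hβW)
    (subset_st (h𝒱𝒞 n (hF𝒱 x q)) (hFmeets x q) (hFyx ▸ hzF)) hzβ

end Topology

/-- if `X` is homogeneous and has a regular `G_δ`-diagonal, then
`|X| ≤ wL(X)^{πχ(X)}`. -/
theorem card_le_weakLindelof_pow_piCharacter_of_homogeneous
    (X : Type u) [TopologicalSpace X]
    (hhom : ∀ x y : X, ∃ h : X ≃ₜ X, h x = y)
    (hd : HasRegularGDeltaDiagonal X) :
    Cardinal.mk X ≤ weakLindelof X ^ piCharacter X := by
  rcases isEmpty_or_nonempty X with hX | ⟨⟨p⟩⟩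
  · simp
  obtain ⟨𝒞, h𝒞, hsep⟩ := hd.exists_isOpenCover_seq
  obtain ⟨𝔅, h𝔅, h𝔅card⟩ := exists_isPiBaseAt_card_le_piCharacter p
  choose 𝒱 h𝒱𝒞 h𝒱card h𝒱dense using fun n => (h𝒞 n).exists_dense_sUnion_card_le
  choose h hhp using hhom p
  obtain ⟨f, hf⟩ := exists_injective_pi_of_isPiBaseAt h𝔅 h hhp h𝒱𝒞 h𝒱dense hsep
  calc #X ≤ #(Π q : ℕ × 𝔅, 𝒱 q.1) := mk_le_of_injective hf
    _ ≤ weakLindelof X ^ piCharacter X :=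
      mk_pi_le_pow (fun q => h𝒱card q.1) (mk_prod_nat_le h𝔅card aleph0_le_piCharacter)
        (aleph0_pos.trans_le aleph0_le_weakLindelof).ne'

end DiagonalPaper
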